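/- arXiv:1008.2163 — 4 statements merged into one kernel-verified Lean document; each statement's English description precedes it below -/
import Mathlib

section
/- If ξ is an element of an overring of a ring R with identity, ξ commutes with all elements of R, and f = X^n + a_{n-1}X^{n-1} + ... + a_1 X + a_0 ∈ R[X] is the minimal polynomial of ξ over R (i.e., f(ξ) = 0 but ξ is not a root of any nonzero polynomial in R[X] of degree less than n), then each coefficient a_i of f belongs to the center of R. -/
/-!
For `r ∈ R`, the commutator `C r * f - f * C r` still annihilates `ξ`, because `ξ` commutes
with `φ r`, and it has degree `< n`, because the leading coefficients of `C r * f` and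
`f * C r` are both `r` when `f` is monic. By minimality it vanishes, and its coefficients are
the commutators `r * aᵢ - aᵢ * r`.
-/

open Polynomial

namespace Polynomial

variable {R : Type*} [Ring R]

theorem coeff_C_mul_sub_mul_C (r : R) (f : R[X]) (j : ℕ) :
    (C r * f - f * C r).coeff j = r * f.coeff j - f.coeff j * r := by
  rw [coeff_sub, coeff_C_mul, coeff_mul_C]

theorem Monic.degree_C_mul_sub_mul_C_lt {f : R[X]} (hf : f.Monic) (r : R) :
    (C r * f - f * C r).degree < f.natDegree := by
  refine (degree_lt_iff_coeff_zero _ _).2 fun m hm => ?_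
  rw [coeff_C_mul_sub_mul_C]
  rcases hm.eq_or_lt with rfl | hlt
  · rw [hf.coeff_natDegree, mul_one, one_mul, sub_self]
  · rw [coeff_eq_zero_of_natDegree_lt hlt, mul_zero, zero_mul, sub_self]

theorem eval₂_C_mul_sub_mul_C {S : Type*} [Ring S] (φ : R →+* S) (ξ : S)
    (hcomm : ∀ r, Commute (φ r) ξ) (r : R) (f : R[X]) :
    eval₂ φ ξ (C r * f - f * C r) = φ r * eval₂ φ ξ f - eval₂ φ ξ f * φ r := by
  change eval₂RingHom' φ ξ hcomm (C r * f - f * C r) = _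
  rw [map_sub, map_mul, map_mul, eval₂RingHom'_apply, eval₂RingHom'_apply, eval₂_C]

end Polynomial

theorem coeffs_of_minimal_poly_central_general
    {R S : Type*} [Ring R] [Ring S] (φ : R →+* S)
    (ξ : S) (hcomm : ∀ r : R, Commute (φ r) ξ)
    (f : R[X]) (n : ℕ) (hf : f.Monic) (hdeg : f.natDegree = n)
    (hroot : Polynomial.eval₂ φ ξ f = 0)
    (hmin : ∀ g : R[X], g ≠ 0 → Polynomial.eval₂ φ ξ g = 0 → n ≤ g.natDegree) :
    ∀ i : ℕ, f.coeff i ∈ Set.center R := by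
  intro i
  refine Semigroup.mem_center_iff.2 fun r => ?_
  have hcomm_root : eval₂ φ ξ (C r * f - f * C r) = 0 := by
    rw [eval₂_C_mul_sub_mul_C φ ξ hcomm, hroot, mul_zero, zero_mul, sub_zero]
  have hcomm_zero : C r * f - f * C r = 0 := by
    by_contra hne
    have hlt := hf.degree_C_mul_sub_mul_C_lt r
    rw [hdeg, ← natDegree_lt_iff_degree_lt hne] at hlt
    exact hlt.not_ge (hmin _ hne hcomm_root)
  have hcoeff := coeff_C_mul_sub_mul_C r f i
  rwa [hcomm_zero, coeff_zero, eq_comm, sub_eq_zero] at hcoeff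

/-- If ξ in an overring S of a ring R commutes with (the image of) every
element of R, and f ∈ R[X] is a monic polynomial of degree n with f(ξ) = 0 such that no
nonzero polynomial of degree < n annihilates ξ (i.e. f is the minimal polynomial of ξ),
then every coefficient of f lies in the center of R. -/
theorem coeffs_of_minimal_poly_central
    {R S : Type*} [Ring R] [Ring S] (φ : R →+* S) (hφ : Function.Injective φ)
    (ξ : S) (hcomm : ∀ r : R, Commute (φ r) ξ)
    (f : R[X]) (n : ℕ) (hf : f.Monic) (hdeg : f.natDegree = n)
    (hroot : Polynomial.eval₂ φ ξ f = 0)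
    (hmin : ∀ g : R[X], g ≠ 0 → Polynomial.eval₂ φ ξ g = 0 → n ≤ g.natDegree) :
    ∀ i : ℕ, f.coeff i ∈ Set.center R :=
  coeffs_of_minimal_poly_central_general φ ξ hcomm f n hf hdeg hroot hmin
end

section
/- Let R be a commutative ring, f ∈ R[X] monic of degree n with companion matrix C. For A = p(C) and B = q(C) with p, q ∈ R[X] of degree < n, one has [AB] = (I C C^2 ... C^{n-1}) ([A] ⊗ [B]), where (I C ... C^{n-1}) is the n × n² block matrix with blocks the powers of C, and [A] ⊗ [B] ∈ R^{n²} is the Kronecker product whose (i + n(j-1))-th entry is [A]_i [B]_j. -/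
open Polynomial Matrix

/-! Being a polynomial in C, A commutes with C, and C^j e₁ = e_{j+1} for j < n. Hence the
(j+1)-th column of A is A C^j e₁ = C^j [A], and [AB] = Σ_j B_{j+1,1} A e_{j+1} =
Σ_j B_{j+1,1} C^j [A], which is the block product (I C ⋯ C^{n-1}) ([A] ⊗ [B]). -/

/-- The companion matrix of a (monic, degree n) polynomial f:
columns C·e_j = e_{j+1} for j < n-1, and last column = -(coefficients of f). -/
def companionM {R : Type*} [CommRing R] (n : ℕ) (f : R[X]) : Matrix (Fin n) (Fin n) R :=
  fun i j => if (j : ℕ) = n - 1 then -f.coeff i else if (i : ℕ) = (j : ℕ) + 1 then 1 else 0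

/-- Left Kronecker product of two vectors in R^n, as a vector in R^{n²}
indexed by Fin n × Fin n; block p.2 of the result is x · y_{p.2}. -/
def kron {R : Type*} [CommRing R] {n : ℕ} (x y : Fin n → R) : Fin n × Fin n → R :=
  fun p => x p.1 * y p.2

/-- The n × n² block matrix (I C C² ... C^{n-1}). -/
def powBlocks {R : Type*} [CommRing R] {n : ℕ} (C : Matrix (Fin n) (Fin n) R) :
    Matrix (Fin n) (Fin n × Fin n) R :=
  fun i p => (C ^ (p.2 : ℕ)) i p.1

/-- The coefficient vector in R^n of a polynomial (of degree < n). -/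
def coeffVec {R : Type*} [CommRing R] (n : ℕ) (p : R[X]) : Fin n → R := fun i => p.coeff i

section

variable {m α : Type*} [Fintype m]

theorem col_mul_eq_sum [CommSemiring α] (A B : Matrix m m α) (c : m) :
    (A * B).col c = ∑ j, B j c • A.col j := by
  ext i
  simp [mul_apply, Finset.sum_apply, mul_comm]

theorem mulVec_col_of_commute [Semiring α] [DecidableEq m] {A M : Matrix m m α}
    (h : Commute M A) {c j : m} (hM : M.col c = Pi.single j 1) :
    M *ᵥ A.col c = A.col j := by
  calc M *ᵥ A.col c = (M * A).col c := rfl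
    _ = A *ᵥ M.col c := by rw [h.eq]; rfl
    _ = A.col j := by rw [hM, mulVec_single_one]

end

section

variable {R : Type*} [CommRing R]

theorem powBlocks_mulVec_kron {n : ℕ} (C : Matrix (Fin n) (Fin n) R) (x y : Fin n → R) :
    powBlocks C *ᵥ kron x y = ∑ j, y j • C ^ (j : ℕ) *ᵥ x := by
  ext i
  simp only [mulVec, dotProduct, powBlocks, kron, Fintype.sum_prod_type_right, Finset.sum_apply,
    Pi.smul_apply, smul_eq_mul, Finset.mul_sum]
  refine Finset.sum_congr rfl fun j _ => Finset.sum_congr rfl fun k _ => ?_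
  ring

theorem companionM_col_of_succ_lt {n : ℕ} (f : R[X]) {j : ℕ} (hj : j + 1 < n) :
    (companionM n f).col ⟨j, by omega⟩ = Pi.single ⟨j + 1, hj⟩ 1 := by
  ext k
  have hlast : j ≠ n - 1 := by omega
  simp [companionM, hlast, Pi.single_apply, Fin.ext_iff]

theorem companionM_pow_col_zero {n : ℕ} (hn : 0 < n) (f : R[X]) {j : ℕ} (hj : j < n) :
    (companionM n f ^ j).col ⟨0, hn⟩ = Pi.single ⟨j, hj⟩ 1 := by
  induction j with
  | zero => ext k; simp [one_apply, Pi.single_apply]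
  | succ j ih =>
    calc (companionM n f ^ (j + 1)).col ⟨0, hn⟩
        = companionM n f *ᵥ (companionM n f ^ j).col ⟨0, hn⟩ := by rw [pow_succ']; rfl
      _ = _ := by rw [ih (by omega), mulVec_single_one, companionM_col_of_succ_lt]

end

theorem product_formula_matrices_general
    {R : Type*} [CommRing R] (n : ℕ) (hn : 0 < n) (f : R[X])
    (C : Matrix (Fin n) (Fin n) R) (hC : C = companionM n f)
    (p : R[X])
    (A B : Matrix (Fin n) (Fin n) R) (hA : A = aeval C p) :
    (fun i => (A * B) i ⟨0, hn⟩) =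
      (powBlocks C).mulVec (kron (fun i => A i ⟨0, hn⟩) (fun i => B i ⟨0, hn⟩)) := by
  have hcol (j : Fin n) : C ^ (j : ℕ) *ᵥ A.col ⟨0, hn⟩ = A.col j := by
    refine mulVec_col_of_commute ?_ (hC ▸ companionM_pow_col_zero hn f j.isLt)
    simpa [hA] using (Commute.all (X ^ (j : ℕ)) p).map (aeval C)
  calc (fun i => (A * B) i ⟨0, hn⟩) = ∑ j, B j ⟨0, hn⟩ • A.col j := col_mul_eq_sum A B _
    _ = ∑ j, B j ⟨0, hn⟩ • C ^ (j : ℕ) *ᵥ A.col ⟨0, hn⟩ := by simp only [hcol]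
    _ = _ := (powBlocks_mulVec_kron C _ _).symm

/-- For A = p(C), B = q(C) with deg p, deg q < n,
[AB] = (I C ... C^{n-1})([A] ⊗ [B]). -/
theorem product_formula_matrices
    {R : Type*} [CommRing R] (n : ℕ) (hn : 0 < n) (f : R[X])
    (hf : f.Monic) (hdeg : f.natDegree = n)
    (C : Matrix (Fin n) (Fin n) R) (hC : C = companionM n f)
    (p q : R[X]) (hp : p.degree < n) (hq : q.degree < n)
    (A B : Matrix (Fin n) (Fin n) R) (hA : A = aeval C p) (hB : B = aeval C q) :
    (fun i => (A * B) i ⟨0, hn⟩) =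
      (powBlocks C).mulVec (kron (fun i => A i ⟨0, hn⟩) (fun i => B i ⟨0, hn⟩)) :=
  product_formula_matrices_general n hn f C hC p A B hA
end

section
/- Let R be a commutative ring, f ∈ R[X] monic of degree n with companion matrix C. The map R^n → M_n(R) sending x to the matrix whose j-th column is C^{j-1} x is injective, R-linear, and its image is exactly the set of matrices of the form p(C) with p ∈ R[X] of degree < n; moreover with the product x · y := (I C ... C^{n-1})(x ⊗ y), R^n becomes a (commutative, associative, unital) R-algebra isomorphic to R[X]/(f). -/
open Polynomial Matrix

/-! With `C` the companion matrix of `f` and `e₀` the first basis vector, let `K x` be the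
Krylov matrix with columns `C ^ j x`. Since `C ^ j e₀ = e_j` for `j < n`, `K e₀ = 1`, and as
`K` intertwines multiplication by anything commuting with `C`, `K (p(C) e₀) = p(C)` for every
polynomial `p`. Moreover `p(C) e₀` is the coefficient vector of `p` when `deg p < n`, and
`f(C) e₀ = C ^ n e₀ + (coefficients of f below n) = 0`, whence `f(C) = K (f(C) e₀) = 0`.
So `x ↦ K x` identifies `R^n` with `R[X]/(f)` acting through `C`, and the product
`(I C ⋯ C^{n-1})(x ⊗ y) = K x y` is the transported multiplication of that quotient. -/

namespace Matrix

section Krylov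

variable {R ι : Type*} [CommSemiring R] [Fintype ι] [DecidableEq ι] {m : ℕ}

def krylov (A : Matrix ι ι R) (v : ι → R) : Matrix ι (Fin m) R :=
  of fun i j => (A ^ (j : ℕ) *ᵥ v) i

variable (A : Matrix ι ι R)

theorem krylov_mulVec_single_one (v : ι → R) (j : Fin m) :
    krylov A v *ᵥ Pi.single j 1 = A ^ (j : ℕ) *ᵥ v := by
  ext i
  simp [krylov]

theorem krylov_injective (hm : 0 < m) : Function.Injective (krylov (m := m) A) := by
  intro v w h
  simpa only [krylov_mulVec_single_one, pow_zero, one_mulVec] using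
    congrArg (· *ᵥ Pi.single ⟨0, hm⟩ 1) h

@[simp]
theorem krylov_zero : krylov (m := m) A 0 = 0 := by
  ext i j
  simp [krylov]

theorem krylov_add (v w : ι → R) : krylov (m := m) A (v + w) = krylov A v + krylov A w := by
  ext i j
  simp [krylov, mulVec_add]

theorem krylov_smul (r : R) (v : ι → R) : krylov (m := m) A (r • v) = r • krylov A v := by
  ext i j
  simp [krylov, mulVec_smul]

theorem krylov_mulVec_of_commute {B : Matrix ι ι R} (hAB : Commute A B) (v : ι → R) :
    krylov (m := m) A (B *ᵥ v) = B * krylov A v := by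
  ext i j
  rw [krylov, of_apply, mulVec_mulVec, (hAB.pow_left j).eq, ← mulVec_mulVec]
  simp [krylov, mulVec, dotProduct, mul_apply]

theorem krylov_aeval_mulVec (p : R[X]) (v : ι → R) :
    krylov (m := m) A (aeval A p *ᵥ v) = aeval A p * krylov A v :=
  krylov_mulVec_of_commute A (by simpa using (commute_X p).map (aeval A)) v

end Krylov

theorem powBlocks_mulVec_kron {R : Type*} [CommRing R] {n : ℕ} (A : Matrix (Fin n) (Fin n) R)
    (x y : Fin n → R) : powBlocks A *ᵥ kron x y = krylov A x *ᵥ y := by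
  ext i
  simp only [mulVec, dotProduct, powBlocks, kron, krylov, of_apply, Fintype.sum_prod_type,
    Finset.sum_mul, mul_assoc]
  exact Finset.sum_comm

end Matrix

theorem Polynomial.Monic.eq_X_pow_add_ofFn_coeffVec {R : Type*} [CommRing R] [DecidableEq R]
    {n : ℕ} {f : R[X]} (hf : f.Monic) (hdeg : f.natDegree = n) :
    f = X ^ n + ofFn n (coeffVec n f) := by
  ext k
  rcases lt_trichotomy k n with hk | rfl | hk
  · simp [coeff_X_pow, hk.ne, hk, coeffVec]
  · simp [← hdeg, hf.coeff_natDegree]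
  · simp [coeff_X_pow, hk.ne', hk.le, coeff_eq_zero_of_natDegree_lt (hdeg ▸ hk)]

theorem coeffVec_eq_zero_iff {R : Type*} [CommRing R] {n : ℕ} {q : R[X]} (hq : q.natDegree < n) :
    coeffVec n q = 0 ↔ q = 0 := by
  refine ⟨fun h => ext fun k => ?_, fun h => h ▸ funext fun _ => coeff_zero _⟩
  by_cases hk : k < n
  · exact congrFun h ⟨k, hk⟩
  · exact coeff_eq_zero_of_natDegree_lt (by omega)

section Companion

variable {R : Type*} [CommRing R] {n : ℕ} (hn : 0 < n) (f : R[X])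
include hn

theorem companionM_pow_mulVec_single_zero (j : Fin n) :
    companionM n f ^ (j : ℕ) *ᵥ Pi.single ⟨0, hn⟩ 1 = Pi.single j 1 := by
  obtain ⟨k, hk⟩ := j
  induction k with
  | zero => rw [Fin.val_mk, pow_zero, one_mulVec]
  | succ k ih =>
    rw [pow_succ', ← mulVec_mulVec, ih (by omega), mulVec_single_one]
    ext i
    simp [companionM, Pi.single_apply, Fin.ext_iff, show k ≠ n - 1 by omega]

theorem companionM_pow_self_mulVec_single_zero :
    companionM n f ^ n *ᵥ Pi.single ⟨0, hn⟩ 1 = -coeffVec n f := by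
  obtain ⟨m, rfl⟩ := Nat.exists_eq_add_one_of_ne_zero hn.ne'
  have hlast := companionM_pow_mulVec_single_zero hn f (Fin.last m)
  rw [Fin.val_last] at hlast
  rw [pow_succ', ← mulVec_mulVec, hlast, mulVec_single_one]
  ext i
  simp [companionM, coeffVec]

theorem krylov_companionM_single_zero :
    krylov (m := n) (companionM n f) (Pi.single ⟨0, hn⟩ 1) = 1 := by
  ext i j
  rw [krylov, of_apply, companionM_pow_mulVec_single_zero hn f j, Pi.single_apply, one_apply]

theorem krylov_companionM_aeval_mulVec (p : R[X]) :
    krylov (companionM n f) (aeval (companionM n f) p *ᵥ Pi.single ⟨0, hn⟩ 1) =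
      aeval (companionM n f) p := by
  rw [krylov_aeval_mulVec, krylov_companionM_single_zero, mul_one]

theorem aeval_companionM_ofFn_mulVec [DecidableEq R] (x : Fin n → R) :
    aeval (companionM n f) (ofFn n x) *ᵥ Pi.single ⟨0, hn⟩ 1 = x := by
  simp only [ofFn_eq_sum_monomial, map_sum, aeval_monomial, sum_mulVec, ← Algebra.smul_def,
    smul_mulVec, companionM_pow_mulVec_single_zero hn f]
  simpa [← Pi.single_smul'] using Finset.univ_sum_single x

theorem aeval_companionM_mulVec_of_natDegree_lt {q : R[X]} (hq : q.natDegree < n) :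
    aeval (companionM n f) q *ᵥ Pi.single ⟨0, hn⟩ 1 = coeffVec n q := by
  classical
  conv_lhs => rw [← ofFn_comp_toFn_eq_id_of_natDegree_lt hq]
  exact aeval_companionM_ofFn_mulVec hn f _

theorem krylov_companionM_eq_aeval_ofFn [DecidableEq R] (x : Fin n → R) :
    krylov (companionM n f) x = aeval (companionM n f) (ofFn n x) := by
  conv_lhs => rw [← aeval_companionM_ofFn_mulVec hn f x]
  exact krylov_companionM_aeval_mulVec hn f _

theorem range_krylov_companionM :
    Set.range (krylov (m := n) (companionM n f)) =
      {A | ∃ p : R[X], p.degree < n ∧ A = aeval (companionM n f) p} := by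
  classical
  ext A
  constructor
  · rintro ⟨x, rfl⟩
    exact ⟨ofFn n x, ofFn_degree_lt x, krylov_companionM_eq_aeval_ofFn hn f x⟩
  · rintro ⟨p, -, rfl⟩
    exact ⟨_, krylov_companionM_aeval_mulVec hn f p⟩

theorem krylov_companionM_mulVec_comm (x y : Fin n → R) :
    krylov (companionM n f) x *ᵥ y = krylov (companionM n f) y *ᵥ x := by
  classical
  rw [krylov_companionM_eq_aeval_ofFn hn f x, krylov_companionM_eq_aeval_ofFn hn f y]
  conv_lhs => rw [← aeval_companionM_ofFn_mulVec hn f y]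
  conv_rhs => rw [← aeval_companionM_ofFn_mulVec hn f x]
  rw [mulVec_mulVec, mulVec_mulVec, ((Commute.all (ofFn n x) (ofFn n y)).map (aeval _)).eq]

theorem krylov_companionM_krylov_mulVec (x y : Fin n → R) :
    krylov (companionM n f) (krylov (companionM n f) x *ᵥ y) =
      krylov (companionM n f) x * krylov (m := n) (companionM n f) y := by
  classical
  rw [krylov_companionM_eq_aeval_ofFn hn f x, krylov_aeval_mulVec]

end Companion

section MonicCompanion

variable {R : Type*} [CommRing R] {n : ℕ} (hn : 0 < n) {f : R[X]} (hf : f.Monic)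
  (hdeg : f.natDegree = n)
include hn hf hdeg

theorem natDegree_modByMonic_lt_of_natDegree_eq (p : R[X]) : (p %ₘ f).natDegree < n := by
  refine hdeg ▸ natDegree_modByMonic_lt p hf ?_
  rintro rfl
  rw [natDegree_one] at hdeg
  omega

theorem coeffVec_modByMonic_eq_zero_iff (p : R[X]) : coeffVec n (p %ₘ f) = 0 ↔ f ∣ p := by
  rw [coeffVec_eq_zero_iff (natDegree_modByMonic_lt_of_natDegree_eq hn hf hdeg p),
    modByMonic_eq_zero_iff_dvd hf]

theorem aeval_companionM_self : aeval (companionM n f) f = 0 := by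
  classical
  have hf₀ : aeval (companionM n f) f *ᵥ Pi.single ⟨0, hn⟩ 1 = 0 := by
    rw [congrArg (aeval (companionM n f)) (hf.eq_X_pow_add_ofFn_coeffVec hdeg), map_add, map_pow,
      aeval_X, add_mulVec, companionM_pow_self_mulVec_single_zero,
      aeval_companionM_ofFn_mulVec, neg_add_cancel]
  rw [← krylov_companionM_aeval_mulVec hn f f, hf₀, krylov_zero]

theorem aeval_companionM_mulVec_single_zero (p : R[X]) :
    aeval (companionM n f) p *ᵥ Pi.single ⟨0, hn⟩ 1 = coeffVec n (p %ₘ f) := by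
  conv_lhs => rw [← modByMonic_add_div p f]
  rw [map_add, map_mul, aeval_companionM_self hn hf hdeg, zero_mul, add_zero]
  exact aeval_companionM_mulVec_of_natDegree_lt hn f
    (natDegree_modByMonic_lt_of_natDegree_eq hn hf hdeg p)

end MonicCompanion

/-- the map x ↦ (matrix with j-th column C^j x) is injective and R-linear,
with image exactly {p(C) : deg p < n}; moreover the product x·y := (I C ... C^{n-1})(x⊗y)
makes R^n a commutative, associative, unital R-algebra isomorphic to R[X]/(f), the
isomorphism being induced by p ↦ coefficient vector of (p mod f). -/
theorem Rn_algebra_structure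
    {R : Type*} [CommRing R] (n : ℕ) (hn : 0 < n) (f : R[X])
    (hf : f.Monic) (hdeg : f.natDegree = n)
    (C : Matrix (Fin n) (Fin n) R) (hC : C = companionM n f)
    (M : (Fin n → R) → Matrix (Fin n) (Fin n) R)
    (hM : ∀ x, M x = fun (i j : Fin n) => ((C ^ (j : ℕ)).mulVec x) i)
    (mul : (Fin n → R) → (Fin n → R) → (Fin n → R))
    (hmul : ∀ x y, mul x y = (powBlocks C).mulVec (kron x y))
    (π : R[X] → (Fin n → R)) (hπ : ∀ p, π p = coeffVec n (p %ₘ f)) :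
    -- M is injective and R-linear
    (Function.Injective M) ∧
    (∀ x y, M (x + y) = M x + M y) ∧ (∀ (r : R) x, M (r • x) = r • M x) ∧
    -- image of M is exactly the polynomials in C of degree < n
    (Set.range M = {A | ∃ p : R[X], p.degree < n ∧ A = aeval C p}) ∧
    -- (R^n, ·) is a commutative associative unital R-algebra
    (∀ x y, mul x y = mul y x) ∧
    (∀ x y z, mul (mul x y) z = mul x (mul y z)) ∧
    (∀ x, mul (Pi.single (⟨0, hn⟩ : Fin n) (1 : R)) x = x) ∧
    (∀ x y z, mul x (y + z) = mul x y + mul x z) ∧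
    (∀ (r : R) x y, mul (r • x) y = r • mul x y) ∧
    -- π induces an R-algebra isomorphism R[X]/(f) ≃ (R^n, ·)
    (∀ p q, π (p + q) = π p + π q) ∧
    (∀ (r : R) p, π (Polynomial.C r * p) = r • π p) ∧
    (∀ p q, π (p * q) = mul (π p) (π q)) ∧
    (π 1 = Pi.single (⟨0, hn⟩ : Fin n) (1 : R)) ∧
    (∀ p, π p = 0 ↔ f ∣ p) ∧
    (Function.Surjective π) := by
  classical
  subst hC
  obtain rfl : M = krylov (companionM n f) := _root_.funext hM
  obtain rfl : mul = fun x y => krylov (companionM n f) x *ᵥ y :=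
    funext₂ fun x y => (hmul x y).trans (powBlocks_mulVec_kron _ x y)
  obtain rfl : π = fun p => aeval (companionM n f) p *ᵥ Pi.single ⟨0, hn⟩ 1 :=
    _root_.funext fun p => (hπ p).trans (aeval_companionM_mulVec_single_zero hn hf hdeg p).symm
  beta_reduce
  refine ⟨krylov_injective _ hn, krylov_add _, krylov_smul _, range_krylov_companionM hn f,
    krylov_companionM_mulVec_comm hn f, fun x y z => ?_, fun x => ?_, fun x y z => mulVec_add _ y z,
    fun r x y => ?_, fun p q => ?_, fun r p => ?_, fun p q => ?_, ?_, fun p => ?_,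
    fun x => ⟨ofFn n x, aeval_companionM_ofFn_mulVec hn f x⟩⟩
  · rw [krylov_companionM_krylov_mulVec hn f, mulVec_mulVec]
  · rw [krylov_companionM_single_zero hn f, one_mulVec]
  · rw [krylov_smul, smul_mulVec]
  · rw [map_add, add_mulVec]
  · rw [← smul_eq_C_mul, map_smul, smul_mulVec]
  · rw [krylov_companionM_aeval_mulVec hn f, mulVec_mulVec, map_mul]
  · rw [map_one, one_mulVec]
  · rw [aeval_companionM_mulVec_single_zero hn hf hdeg, coeffVec_modByMonic_eq_zero_iff hn hf hdeg]
end

section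
/- Let R be a commutative ring, f ∈ R[X] monic of degree n with companion matrix C. Define a binary operation on R^n by x · y := (I C ... C^{n-1})(x ⊗ y). Then this operation is commutative, with identity element e₁ = (1, 0, ..., 0)ᵀ, and distributes over addition. -/
open Polynomial Matrix

/-!
Since `C e_j = e_{j+1}` for `j < n - 1`, the powers of `C` applied to `e_0` are `C^j e_0 = e_j`
for `j < n`. Hence the `j`-th column of `C^k` is `C^k e_j = C^(j+k) e_0`, and
`x · y = ∑_{j,k} x_j y_k C^(j+k) e_0` is visibly symmetric in `x` and `y`. Taking `x = e_0` gives
`e_0 · y = ∑_k y_k C^k e_0 = ∑_k y_k e_k = y`. Distributivity is the bilinearity of `⊗`.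
-/

section

variable {R : Type*} [CommRing R] {n : ℕ}

theorem kron_add_left (x y z : Fin n → R) : kron (x + y) z = kron x z + kron y z := by
  funext p
  simp only [kron, Pi.add_apply, add_mul]

theorem kron_add_right (x y z : Fin n → R) : kron x (y + z) = kron x y + kron x z := by
  funext p
  simp only [kron, Pi.add_apply, mul_add]

theorem companionM_pow_apply_zero (f : R[X]) (hn : 0 < n) (k : ℕ) (hk : k < n) (i : Fin n) :
    (companionM n f ^ k) i ⟨0, hn⟩ = if (i : ℕ) = k then 1 else 0 := by
  induction k generalizing i with
  | zero => simp [Matrix.one_apply, Fin.ext_iff]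
  | succ k ih =>
    have hk' : k < n := by omega
    have hcol : ∀ m : Fin n, companionM n f i m * (companionM n f ^ k) m ⟨0, hn⟩ =
        if m = ⟨k, hk'⟩ then companionM n f i m else 0 := by
      intro m
      rw [ih hk' m]
      split_ifs <;> simp_all [Fin.ext_iff]
    rw [pow_succ', Matrix.mul_apply, Finset.sum_congr rfl fun m _ => hcol m,
      Finset.sum_ite_eq']
    simp [companionM, show k ≠ n - 1 by omega]

theorem companionM_pow_apply_eq_pow_add_apply_zero (f : R[X]) (hn : 0 < n) (k : ℕ)
    (i j : Fin n) :
    (companionM n f ^ k) i j = (companionM n f ^ ((j : ℕ) + k)) i ⟨0, hn⟩ := by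
  have hcol : ∀ m : Fin n, (companionM n f ^ k) i m * (companionM n f ^ (j : ℕ)) m ⟨0, hn⟩ =
      if m = j then (companionM n f ^ k) i m else 0 := by
    intro m
    rw [companionM_pow_apply_zero f hn j j.isLt m]
    split_ifs <;> simp_all [Fin.ext_iff]
  rw [add_comm, pow_add, Matrix.mul_apply, Finset.sum_congr rfl fun m _ => hcol m,
    Finset.sum_ite_eq']
  simp

theorem powBlocks_companionM_mulVec_kron_apply (f : R[X]) (hn : 0 < n) (x y : Fin n → R)
    (i : Fin n) :
    (powBlocks (companionM n f) *ᵥ kron x y) i =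
      ∑ j : Fin n, ∑ k : Fin n, (companionM n f ^ ((j : ℕ) + k)) i ⟨0, hn⟩ * (x j * y k) := by
  simp only [mulVec, dotProduct, powBlocks, kron, Fintype.sum_prod_type]
  exact Finset.sum_congr rfl fun j _ => Finset.sum_congr rfl fun k _ => by
    rw [companionM_pow_apply_eq_pow_add_apply_zero f hn]

theorem powBlocks_companionM_mulVec_kron_comm (f : R[X]) (x y : Fin n → R) :
    powBlocks (companionM n f) *ᵥ kron x y = powBlocks (companionM n f) *ᵥ kron y x := by
  funext i
  have hn : 0 < n := i.pos
  rw [powBlocks_companionM_mulVec_kron_apply f hn, powBlocks_companionM_mulVec_kron_apply f hn,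
    Finset.sum_comm]
  refine Finset.sum_congr rfl fun k _ => Finset.sum_congr rfl fun j _ => ?_
  rw [add_comm (k : ℕ), mul_comm (x j)]

theorem powBlocks_companionM_mulVec_kron_single_zero (f : R[X]) (hn : 0 < n) (y : Fin n → R) :
    powBlocks (companionM n f) *ᵥ kron (Pi.single ⟨0, hn⟩ 1) y = y := by
  funext i
  rw [powBlocks_companionM_mulVec_kron_apply f hn, Fintype.sum_eq_single ⟨0, hn⟩]
  · simp only [Pi.single_eq_same, one_mul, zero_add]
    simp_rw [fun k : Fin n => companionM_pow_apply_zero f hn k k.isLt i, Fin.val_inj, ite_mul,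
      one_mul, zero_mul, Finset.sum_ite_eq, Finset.mem_univ, if_true]
  · intro j hj
    simp [Pi.single_eq_of_ne hj]

end

theorem Rn_product_comm_unital_distrib_general
    {R : Type*} [CommRing R] (n : ℕ) (hn : 0 < n) (f : R[X])
    (C : Matrix (Fin n) (Fin n) R) (hC : C = companionM n f)
    (mul : (Fin n → R) → (Fin n → R) → (Fin n → R))
    (hmul : ∀ x y, mul x y = (powBlocks C).mulVec (kron x y)) :
    (∀ x y, mul x y = mul y x) ∧
    (∀ x, mul (Pi.single (⟨0, hn⟩ : Fin n) (1 : R)) x = x) ∧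
    (∀ x, mul x (Pi.single (⟨0, hn⟩ : Fin n) (1 : R)) = x) ∧
    (∀ x y z, mul x (y + z) = mul x y + mul x z) ∧
    (∀ x y z, mul (x + y) z = mul x z + mul y z) := by
  subst hC
  have hcomm : ∀ x y, mul x y = mul y x := fun x y => by
    rw [hmul, hmul, powBlocks_companionM_mulVec_kron_comm]
  have hone : ∀ x, mul (Pi.single ⟨0, hn⟩ 1) x = x := fun x => by
    rw [hmul, powBlocks_companionM_mulVec_kron_single_zero]
  refine ⟨hcomm, hone, fun x => by rw [hcomm, hone], fun x y z => ?_, fun x y z => ?_⟩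
  · simp only [hmul, kron_add_right, mulVec_add]
  · simp only [hmul, kron_add_left, mulVec_add]

/-- the product x·y := (I C ... C^{n-1})(x ⊗ y) on Rⁿ is commutative,
has identity e₁ = (1,0,...,0)ᵀ, and distributes over addition. -/
theorem Rn_product_comm_unital_distrib
    {R : Type*} [CommRing R] (n : ℕ) (hn : 0 < n) (f : R[X])
    (hf : f.Monic) (hdeg : f.natDegree = n)
    (C : Matrix (Fin n) (Fin n) R) (hC : C = companionM n f)
    (mul : (Fin n → R) → (Fin n → R) → (Fin n → R))
    (hmul : ∀ x y, mul x y = (powBlocks C).mulVec (kron x y)) :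
    (∀ x y, mul x y = mul y x) ∧
    (∀ x, mul (Pi.single (⟨0, hn⟩ : Fin n) (1 : R)) x = x) ∧
    (∀ x, mul x (Pi.single (⟨0, hn⟩ : Fin n) (1 : R)) = x) ∧
    (∀ x y z, mul x (y + z) = mul x y + mul x z) ∧
    (∀ x y z, mul (x + y) z = mul x z + mul y z) :=
  Rn_product_comm_unital_distrib_general n hn f C hC mul hmul
end
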